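/- arXiv:1708.07019 — 3 statements merged into one kernel-verified Lean document; each statement's English description precedes it below -/
import Mathlib

section
/- Let r ∈ (−1, 1) and let ρ be the 2×2 matrix with unit diagonal and off-diagonal entries equal to r (so ρ is symmetric positive definite). Let Y = (Y₁, Y₂) ∈ ℝ² and define q_β(λ) = (λ − Y)ᵀ ρ⁻¹ (λ − Y) for λ ∈ ℝ². Then the unique minimizer λ̂ of q_β over the cone Λ_β = (−∞, 0]² is: λ̂ = Y if Y₁ < 0 and Y₂ < 0; λ̂ = (Y₁ − rY₂, 0) if Y₂ ≥ 0 and Y₁ − rY₂ < 0; λ̂ = (0, Y₂ − rY₁) if Y₁ ≥ 0 and Y₂ − rY₁ < 0; and λ̂ = (0, 0) in all remaining cases. -/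
open Matrix

/-!
The objective is the squared `ρ⁻¹`-distance to `Y`, a strictly convex quadratic, so a feasible
point satisfying the Karush–Kuhn–Tucker conditions for the orthant `λ ≤ 0` is its unique
minimizer: if `λ̂ - Y = ρ g` with `g ≤ 0` and `g ⬝ λ̂ = 0`, then expanding around `λ̂` gives
`q(λ) = q(λ̂) + 2 (λ - λ̂) ⬝ g + ‖λ - λ̂‖²_{ρ⁻¹} ≥ q(λ̂) + ‖λ - λ̂‖²_{ρ⁻¹}`.
In each of the four cases of the closed form the multiplier `g` is explicit.
-/

section OrthantProjection

variable {n : Type*} [Fintype n]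

theorem Matrix.IsHermitian.add_dotProduct_mulVec_add {A : Matrix n n ℝ} (hA : A.IsHermitian)
    (u v : n → ℝ) :
    (u + v) ⬝ᵥ A *ᵥ (u + v) = u ⬝ᵥ A *ᵥ u + 2 * (v ⬝ᵥ A *ᵥ u) + v ⬝ᵥ A *ᵥ v := by
  have hsymm : u ⬝ᵥ A *ᵥ v = v ⬝ᵥ A *ᵥ u := by
    rw [← dotProduct_transpose_mulVec, ← conjTranspose_eq_transpose_of_trivial, hA.eq]
  simp only [add_dotProduct, dotProduct_add, mulVec_add, hsymm]
  ring

theorem sub_dotProduct_nonneg_of_nonpos {g x lam : n → ℝ} (hg : g ≤ 0) (hlam : lam ≤ 0)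
    (hgx : g ⬝ᵥ x = 0) : 0 ≤ (lam - x) ⬝ᵥ g := by
  rw [sub_dotProduct, dotProduct_comm x, hgx, sub_zero]
  exact Finset.sum_nonneg fun i _ => mul_nonneg_of_nonpos_of_nonpos (hlam i) (hg i)

variable [DecidableEq n] {S : Matrix n n ℝ} {Y x g : n → ℝ}

theorem dotProduct_inv_mulVec_add_le_of_kkt (hS : S.PosDef) (hg : g ≤ 0) (hgx : g ⬝ᵥ x = 0)
    (hres : x - Y = S *ᵥ g) {lam : n → ℝ} (hlam : lam ≤ 0) :
    (x - Y) ⬝ᵥ S⁻¹ *ᵥ (x - Y) + (lam - x) ⬝ᵥ S⁻¹ *ᵥ (lam - x) ≤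
      (lam - Y) ⬝ᵥ S⁻¹ *ᵥ (lam - Y) := by
  have hgrad : S⁻¹ *ᵥ (x - Y) = g := by
    rw [hres, mulVec_mulVec, nonsing_inv_mul _ ((isUnit_iff_isUnit_det S).mp hS.isUnit),
      one_mulVec]
  rw [show lam - Y = (x - Y) + (lam - x) by abel, hS.inv.isHermitian.add_dotProduct_mulVec_add,
    hgrad]
  linarith [sub_dotProduct_nonneg_of_nonpos hg hlam hgx]

theorem unique_minimizer_of_kkt (hS : S.PosDef) (hg : g ≤ 0) (hgx : g ⬝ᵥ x = 0)
    (hres : x - Y = S *ᵥ g) :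
    (∀ lam ≤ 0, (x - Y) ⬝ᵥ S⁻¹ *ᵥ (x - Y) ≤ (lam - Y) ⬝ᵥ S⁻¹ *ᵥ (lam - Y)) ∧
    (∀ lam ≤ 0, (lam - Y) ⬝ᵥ S⁻¹ *ᵥ (lam - Y) = (x - Y) ⬝ᵥ S⁻¹ *ᵥ (x - Y) → lam = x) := by
  refine ⟨fun lam hlam => ?_, fun lam hlam heq => ?_⟩
  · have hnonneg := hS.inv.posSemidef.dotProduct_mulVec_nonneg (lam - x)
    rw [star_trivial] at hnonneg
    linarith [dotProduct_inv_mulVec_add_le_of_kkt hS hg hgx hres hlam]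
  · by_contra hne
    have hpos := hS.inv.dotProduct_mulVec_pos (sub_ne_zero.mpr hne)
    rw [star_trivial] at hpos
    linarith [dotProduct_inv_mulVec_add_le_of_kkt hS hg hgx hres hlam]

end OrthantProjection

theorem nonpos_of_fin_two {α : Type*} [LE α] [Zero α] {v : Fin 2 → α} (h₀ : v 0 ≤ 0)
    (h₁ : v 1 ≤ 0) : v ≤ 0 :=
  Pi.le_def.2 (Fin.forall_fin_two.2 ⟨h₀, h₁⟩)

section Correlation

variable {r : ℝ}

theorem posDef_correlation (hr₁ : -1 < r) (hr₂ : r < 1) :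
    (!![1, r; r, 1] : Matrix (Fin 2) (Fin 2) ℝ).PosDef := by
  refine PosDef.of_dotProduct_mulVec_pos ?_ fun x hx => ?_
  · ext i j
    fin_cases i <;> fin_cases j <;> rfl
  · have hx' : x 0 ≠ 0 ∨ x 1 ≠ 0 := by
      by_contra! h
      exact hx (funext fun i => by fin_cases i <;> simp [h.1, h.2])
    have hdet : 0 < 1 - r ^ 2 := by nlinarith
    simp only [star_trivial, dotProduct, mulVec, Fin.sum_univ_two, of_apply, cons_val',
      cons_val_zero, cons_val_one, empty_val', cons_val_fin_one]
    rcases hx' with h | h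
    · nlinarith [mul_pos hdet (sq_pos_of_ne_zero h), sq_nonneg (x 1 + r * x 0)]
    · nlinarith [mul_pos hdet (sq_pos_of_ne_zero h), sq_nonneg (x 0 + r * x 1)]

noncomputable def quadrantProj (r : ℝ) (Y : Fin 2 → ℝ) : Fin 2 → ℝ :=
  if Y 0 < 0 ∧ Y 1 < 0 then Y
  else if Y 1 ≥ 0 ∧ Y 0 - r * Y 1 < 0 then ![Y 0 - r * Y 1, 0]
  else if Y 0 ≥ 0 ∧ Y 1 - r * Y 0 < 0 then ![0, Y 1 - r * Y 0]
  else ![0, 0]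

theorem sub_mul_nonneg_of_not_cases (hr₁ : -1 < r) {a b : ℝ}
    (h₁ : ¬(a < 0 ∧ b < 0)) (h₂ : ¬(b ≥ 0 ∧ a - r * b < 0)) (h₃ : ¬(a ≥ 0 ∧ b - r * a < 0)) :
    0 ≤ a - r * b := by
  push Not at h₁ h₂ h₃
  by_cases hb : 0 ≤ b
  · exact h₂ hb
  have ha : 0 ≤ a := by
    by_contra! ha
    exact hb (h₁ ha)
  have := h₃ ha
  nlinarith

theorem quadrantProj_kkt (hr₁ : -1 < r) (hr₂ : r < 1) (Y : Fin 2 → ℝ) :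
    quadrantProj r Y ≤ 0 ∧ ∃ g ≤ 0, g ⬝ᵥ quadrantProj r Y = 0 ∧
      quadrantProj r Y - Y = !![1, r; r, 1] *ᵥ g := by
  unfold quadrantProj
  split_ifs with h₁ h₂ h₃
  · exact ⟨nonpos_of_fin_two h₁.1.le h₁.2.le, 0, le_rfl, zero_dotProduct _, by simp⟩
  · refine ⟨nonpos_of_fin_two h₂.2.le le_rfl, ![0, -Y 1],
      nonpos_of_fin_two le_rfl (neg_nonpos.mpr h₂.1), by simp [dotProduct], ?_⟩
    ext i
    fin_cases i <;> simp [mulVec, dotProduct]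
  · refine ⟨nonpos_of_fin_two le_rfl h₃.2.le, ![-Y 0, 0],
      nonpos_of_fin_two (neg_nonpos.mpr h₃.1) le_rfl, by simp [dotProduct], ?_⟩
    ext i
    fin_cases i <;> simp [mulVec, dotProduct]
  · have hA := sub_mul_nonneg_of_not_cases hr₁ h₁ h₂ h₃
    have hB := sub_mul_nonneg_of_not_cases hr₁ (a := Y 1) (b := Y 0) (by tauto) h₃ h₂
    have hdet : 0 < 1 - r ^ 2 := by nlinarith
    -- `g = -ρ⁻¹ Y`
    refine ⟨nonpos_of_fin_two le_rfl le_rfl,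
      ![(r * Y 1 - Y 0) / (1 - r ^ 2), (r * Y 0 - Y 1) / (1 - r ^ 2)],
      nonpos_of_fin_two (div_nonpos_of_nonpos_of_nonneg (by linarith) hdet.le)
        (div_nonpos_of_nonpos_of_nonneg (by linarith) hdet.le), by simp [dotProduct], ?_⟩
    ext i
    fin_cases i <;> simp [mulVec, dotProduct] <;> field_simp <;> ring

end Correlation

/-- Closed-form projection of `Y ∈ ℝ²` onto the negative quadrant `(−∞,0]²` with respect
to the quadratic form induced by the inverse of a 2×2 correlation matrix `ρ`. -/
theorem proj_negative_quadrant (r : ℝ) (hr₁ : -1 < r) (hr₂ : r < 1) (Y : Fin 2 → ℝ) :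
    let ρ : Matrix (Fin 2) (Fin 2) ℝ := !![1, r; r, 1]
    let qβ : (Fin 2 → ℝ) → ℝ := fun lam => (lam - Y) ⬝ᵥ (ρ⁻¹ *ᵥ (lam - Y))
    let lamhat : Fin 2 → ℝ :=
      if Y 0 < 0 ∧ Y 1 < 0 then Y
      else if Y 1 ≥ 0 ∧ Y 0 - r * Y 1 < 0 then ![Y 0 - r * Y 1, 0]
      else if Y 0 ≥ 0 ∧ Y 1 - r * Y 0 < 0 then ![0, Y 1 - r * Y 0]
      else ![0, 0]
    (lamhat 0 ≤ 0 ∧ lamhat 1 ≤ 0) ∧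
    (∀ lam : Fin 2 → ℝ, lam 0 ≤ 0 → lam 1 ≤ 0 → qβ lamhat ≤ qβ lam) ∧
    (∀ lam : Fin 2 → ℝ, lam 0 ≤ 0 → lam 1 ≤ 0 → qβ lam = qβ lamhat → lam = lamhat) := by
  intro ρ qβ lamhat
  obtain ⟨hfeas, g, hg, hgx, hres⟩ := quadrantProj_kkt hr₁ hr₂ Y
  obtain ⟨hmin, huniq⟩ := unique_minimizer_of_kkt (posDef_correlation hr₁ hr₂) hg hgx hres
  exact ⟨⟨hfeas 0, hfeas 1⟩, fun lam h₀ h₁ => hmin lam (nonpos_of_fin_two h₀ h₁),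
    fun lam h₀ h₁ => huniq lam (nonpos_of_fin_two h₀ h₁)⟩
end

section
/- Let J be a symmetric positive definite p×p real matrix partitioned with respect to the first c coordinates (1 ≤ c < p) as J = [[J_β, J_βδ], [J_δβ, J_δ]], let G ∈ ℝ^p be partitioned as (G_β, G_δ), set Y := J⁻¹ G with blocks (Y_β, Y_δ), and let H = (I_c : 0) ∈ ℝ^{c×p}. Let Λ_β ⊆ ℝ^c be a nonempty closed convex cone. Then the quadratic form q(λ) = (λ − Y)ᵀ J (λ − Y) attains its minimum over the product set Λ_β × ℝ^{p−c} at a unique point λ̂ = (λ̂_β, λ̂_δ), where λ̂_β is the unique minimizer over Λ_β of q_β(λ_β) := (λ_β − Y_β)ᵀ (H J⁻¹ Hᵀ)⁻¹ (λ_β − Y_β), and λ̂_δ = J_δ⁻¹ G_δ − J_δ⁻¹ J_δβ λ̂_β. -/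
/-!
Completing the square in the δ-block writes
`q(λ) = q_β(λ_β) + (λ_δ - φ(λ_β))ᵀ J_δ (λ_δ - φ(λ_β))` with `φ(λ_β) = J_δ⁻¹ G_δ - J_δ⁻¹ J_δβ λ_β`,
because the Schur complement `J_β - J_βδ J_δ⁻¹ J_δβ` is the inverse of the upper-left block
`H J⁻¹ Hᵀ` of `J⁻¹`. The second summand vanishes exactly at `λ_δ = φ(λ_β)`, so minimizing `q`
over `Λ_β × ℝ^{p-c}` reduces to minimizing `q_β` over `Λ_β`; there a minimizer exists because
`q_β` is coercive and `Λ_β` is closed, and it is unique because `q_β` is strictly convex and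
`Λ_β` is convex.
-/

open Matrix Filter

section SplitMinimization

variable {ι₁ ι₂ R : Type*} [AddGroup R] {f : (ι₁ ⊕ ι₂ → R) → ℝ} {g : (ι₁ → R) → ℝ}
  {h : (ι₂ → R) → ℝ} {φ : (ι₁ → R) → ι₂ → R} {s : Set (ι₁ → R)} {a : ι₁ → R}

lemma isMinOn_sumElim_of_eq_add
    (hf : ∀ x, f x = g (x ∘ Sum.inl) + h (x ∘ Sum.inr - φ (x ∘ Sum.inl)))
    (hh : ∀ w, 0 ≤ h w) (h0 : h 0 = 0) (ha : IsMinOn g s a) :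
    IsMinOn f {x | x ∘ Sum.inl ∈ s} (Sum.elim a (φ a)) := by
  intro x hx
  rw [Set.mem_ofPred_eq, hf, hf, Sum.elim_comp_inl, Sum.elim_comp_inr, sub_self, h0, add_zero]
  exact (ha hx).trans (le_add_of_nonneg_right (hh _))

lemma eq_sumElim_of_eq_add
    (hf : ∀ x, f x = g (x ∘ Sum.inl) + h (x ∘ Sum.inr - φ (x ∘ Sum.inl)))
    (hh : ∀ w, w ≠ 0 → 0 < h w) (h0 : h 0 = 0) (ha : IsMinOn g s a)
    (huniq : ∀ b ∈ s, g b = g a → b = a) {x : ι₁ ⊕ ι₂ → R} (hx : x ∘ Sum.inl ∈ s)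
    (hfx : f x = f (Sum.elim a (φ a))) : x = Sum.elim a (φ a) := by
  rw [hf, hf, Sum.elim_comp_inl, Sum.elim_comp_inr, sub_self, h0, add_zero] at hfx
  have hga : g a ≤ g (x ∘ Sum.inl) := ha hx
  have hw : x ∘ Sum.inr - φ (x ∘ Sum.inl) = 0 := by
    by_contra hw
    linarith [hh _ hw]
  have hx₁ : x ∘ Sum.inl = a := huniq _ hx (by rw [hw, h0] at hfx; linarith)
  have hx₂ : x ∘ Sum.inr = φ a := by rw [← hx₁]; exact sub_eq_zero.1 hw
  rw [← Sum.elim_comp_inl_inr x, hx₁, hx₂]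

end SplitMinimization

namespace Matrix

section QuadraticForm

variable {n : Type*} [Fintype n] {M : Matrix n n ℝ}

lemma smul_dotProduct_mulVec_smul (M : Matrix n n ℝ) (a : ℝ) (v : n → ℝ) :
    (a • v) ⬝ᵥ M *ᵥ (a • v) = a ^ 2 * (v ⬝ᵥ M *ᵥ v) := by
  rw [mulVec_smul, dotProduct_smul, smul_dotProduct, smul_eq_mul, smul_eq_mul]
  ring

lemma PosDef.dotProduct_mulVec_pos' (hM : M.PosDef) {v : n → ℝ} (hv : v ≠ 0) :
    0 < v ⬝ᵥ M *ᵥ v := by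
  simpa using hM.dotProduct_mulVec_pos hv

lemma PosDef.exists_pos_mul_norm_sq_le (hM : M.PosDef) :
    ∃ μ > 0, ∀ v : n → ℝ, μ * ‖v‖ ^ 2 ≤ v ⬝ᵥ M *ᵥ v := by
  cases isEmpty_or_nonempty n
  · exact ⟨1, one_pos, fun v => by simp [Subsingleton.elim v 0]⟩
  have hcont : Continuous fun v : n → ℝ => v ⬝ᵥ M *ᵥ v := by
    simp only [dotProduct, mulVec]; fun_prop
  obtain ⟨u, hu, hmin⟩ := (isCompact_sphere (0 : n → ℝ) 1).exists_isMinOn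
    (NormedSpace.sphere_nonempty.2 zero_le_one) hcont.continuousOn
  have hu0 : u ≠ 0 := ne_zero_of_mem_unit_sphere ⟨u, hu⟩
  refine ⟨u ⬝ᵥ M *ᵥ u, hM.dotProduct_mulVec_pos' hu0, fun v => ?_⟩
  rcases eq_or_ne v 0 with rfl | hv
  · simp
  have hv' : ‖v‖ ≠ 0 := norm_ne_zero_iff.2 hv
  have := isMinOn_iff.1 hmin (‖v‖⁻¹ • v) (by simp [norm_smul, hv'])
  rw [smul_dotProduct_mulVec_smul] at this
  calc (u ⬝ᵥ M *ᵥ u) * ‖v‖ ^ 2 ≤ ‖v‖⁻¹ ^ 2 * (v ⬝ᵥ M *ᵥ v) * ‖v‖ ^ 2 := by gcongr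
    _ = v ⬝ᵥ M *ᵥ v := by field_simp

lemma PosDef.tendsto_cocompact_dotProduct_mulVec_sub (hM : M.PosDef) (y : n → ℝ) :
    Tendsto (fun v => (v - y) ⬝ᵥ M *ᵥ (v - y)) (cocompact _) atTop := by
  obtain ⟨μ, hμ, hle⟩ := hM.exists_pos_mul_norm_sq_le
  have hnorm : Tendsto (fun v : n → ℝ => ‖v - y‖) (cocompact _) atTop :=
    tendsto_norm_cocompact_atTop.comp (Homeomorph.subRight y).isClosedEmbedding.tendsto_cocompact
  exact tendsto_atTop_mono (fun v => hle (v - y))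
    (((tendsto_pow_atTop two_ne_zero).comp hnorm).const_mul_atTop hμ)

lemma PosDef.exists_isMinOn_dotProduct_mulVec_sub (hM : M.PosDef) (y : n → ℝ)
    {s : Set (n → ℝ)} (hne : s.Nonempty) (hs : IsClosed s) :
    ∃ x ∈ s, IsMinOn (fun v => (v - y) ⬝ᵥ M *ᵥ (v - y)) s x := by
  obtain ⟨x₀, hx₀⟩ := hne
  refine ContinuousOn.exists_isMinOn' ?_ hs hx₀ ?_
  · simp only [dotProduct, mulVec]; fun_prop
  · exact ((hM.tendsto_cocompact_dotProduct_mulVec_sub y).eventually_ge_atTop _).filter_mono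
      inf_le_left

lemma PosDef.strictConvexOn_dotProduct_mulVec_sub (hM : M.PosDef) (y : n → ℝ)
    {s : Set (n → ℝ)} (hs : Convex ℝ s) :
    StrictConvexOn ℝ s (fun v => (v - y) ⬝ᵥ M *ᵥ (v - y)) := by
  refine ⟨hs, fun x _ z _ hxz a b ha hb hab => ?_⟩
  have hpos := hM.dotProduct_mulVec_pos' (sub_ne_zero.2 hxz)
  have hcomb : a • x + b • z - y = a • (x - y) + b • (z - y) := by
    rw [smul_sub, smul_sub, sub_add_sub_comm, ← add_smul, hab, one_smul]
  have key (u w : n → ℝ) : (a • u + b • w) ⬝ᵥ M *ᵥ (a • u + b • w) =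
      a * (u ⬝ᵥ M *ᵥ u) + b * (w ⬝ᵥ M *ᵥ w) - a * b * ((u - w) ⬝ᵥ M *ᵥ (u - w)) := by
    simp only [mulVec_add, mulVec_sub, mulVec_smul, dotProduct_add, dotProduct_sub,
      add_dotProduct, sub_dotProduct, dotProduct_smul, smul_dotProduct, smul_eq_mul]
    linear_combination (a * (u ⬝ᵥ M *ᵥ u) + b * (w ⬝ᵥ M *ᵥ w)) * hab
  dsimp only
  rw [hcomb, key, sub_sub_sub_cancel_right, smul_eq_mul, smul_eq_mul]
  nlinarith [mul_pos (mul_pos ha hb) hpos]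

end QuadraticForm

section Blocks

variable {m n : Type*} [Fintype m] [Fintype n] [DecidableEq m]

lemma fromCols_one_zero_mul_mul_transpose {α : Type*} [Semiring α]
    (M : Matrix (m ⊕ n) (m ⊕ n) α) :
    (fromCols 1 0 : Matrix m (m ⊕ n) α) * M * (fromCols 1 0 : Matrix m (m ⊕ n) α)ᵀ =
      M.toBlocks₁₁ := by
  ext i j
  simp [mul_apply, Fintype.sum_sum_type, one_apply, toBlocks₁₁]

lemma inv_toBlocks₁₁_inv [DecidableEq n] {α : Type*} [CommRing α]
    (J : Matrix (m ⊕ n) (m ⊕ n) α) (hJ : IsUnit J) (hD : IsUnit J.toBlocks₂₂) :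
    (J⁻¹.toBlocks₁₁)⁻¹ = J.toBlocks₁₁ - J.toBlocks₁₂ * J.toBlocks₂₂⁻¹ * J.toBlocks₂₁ := by
  obtain ⟨A, B, C, D, rfl⟩ : ∃ A B C D, J = fromBlocks A B C D :=
    ⟨_, _, _, _, (fromBlocks_toBlocks J).symm⟩
  rw [toBlocks_fromBlocks₂₂] at hD
  let := hD.invertible
  let := hJ.invertible
  let := invertibleOfFromBlocks₂₂Invertible A B C D
  simp only [toBlocks_fromBlocks₁₁, toBlocks_fromBlocks₁₂, toBlocks_fromBlocks₂₁,
    toBlocks_fromBlocks₂₂]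
  rw [← invOf_eq_nonsing_inv (fromBlocks A B C D), invOf_fromBlocks₂₂_eq, toBlocks_fromBlocks₁₁,
    ← invOf_eq_nonsing_inv, invOf_invOf, invOf_eq_nonsing_inv]

lemma sub_dotProduct_mulVec_sub_eq_schur_add [DecidableEq n] (J : Matrix (m ⊕ n) (m ⊕ n) ℝ)
    (hJ : J.IsHermitian) (hJu : IsUnit J) (hD : IsUnit J.toBlocks₂₂) {Y G : m ⊕ n → ℝ}
    (hY : J *ᵥ Y = G) (x : m ⊕ n → ℝ) :
    (x - Y) ⬝ᵥ J *ᵥ (x - Y) =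
      (x ∘ Sum.inl - Y ∘ Sum.inl) ⬝ᵥ (J⁻¹.toBlocks₁₁)⁻¹ *ᵥ (x ∘ Sum.inl - Y ∘ Sum.inl) +
      (x ∘ Sum.inr - (J.toBlocks₂₂⁻¹ *ᵥ (G ∘ Sum.inr) -
          J.toBlocks₂₂⁻¹ *ᵥ (J.toBlocks₂₁ *ᵥ (x ∘ Sum.inl)))) ⬝ᵥ J.toBlocks₂₂ *ᵥ
        (x ∘ Sum.inr - (J.toBlocks₂₂⁻¹ *ᵥ (G ∘ Sum.inr) -
          J.toBlocks₂₂⁻¹ *ᵥ (J.toBlocks₂₁ *ᵥ (x ∘ Sum.inl)))) := by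
  rw [inv_toBlocks₁₁_inv J hJu hD]
  obtain ⟨A, B, C, D, rfl⟩ : ∃ A B C D, J = fromBlocks A B C D :=
    ⟨_, _, _, _, (fromBlocks_toBlocks J).symm⟩
  obtain ⟨-, rfl, -, hDh⟩ := isHermitian_fromBlocks_iff.1 hJ
  simp only [toBlocks_fromBlocks₁₁, toBlocks_fromBlocks₁₂, toBlocks_fromBlocks₂₁,
    toBlocks_fromBlocks₂₂] at hD ⊢
  let := hD.invertible
  have hG : G ∘ Sum.inr = Bᴴ *ᵥ (Y ∘ Sum.inl) + D *ᵥ (Y ∘ Sum.inr) := by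
    rw [← hY, ← Sum.elim_comp_inl_inr Y, fromBlocks_mulVec]
    simp
  have hres : x ∘ Sum.inr - (D⁻¹ *ᵥ (G ∘ Sum.inr) - D⁻¹ *ᵥ (Bᴴ *ᵥ (x ∘ Sum.inl))) =
      (D⁻¹ * Bᴴ) *ᵥ (x ∘ Sum.inl - Y ∘ Sum.inl) + (x ∘ Sum.inr - Y ∘ Sum.inr) := by
    simp only [hG, mulVec_add, mulVec_sub, mulVec_mulVec, inv_mul_of_invertible, one_mulVec]
    abel
  have hxY : x - Y = (x ∘ Sum.inl - Y ∘ Sum.inl) ⊕ᵥ (x ∘ Sum.inr - Y ∘ Sum.inr) :=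
    (Sum.elim_comp_inl_inr (x - Y)).symm
  have := schur_complement_eq₂₂ A B (x ∘ Sum.inl - Y ∘ Sum.inl) (x ∘ Sum.inr - Y ∘ Sum.inr) hDh
  simp only [star_trivial] at this
  rw [hres, hxY, add_comm, dotProduct_mulVec, this, ← dotProduct_mulVec, ← dotProduct_mulVec]

end Blocks

end Matrix

theorem cone_product_minimizer_general {c m : ℕ}
    (J : Matrix (Fin c ⊕ Fin m) (Fin c ⊕ Fin m) ℝ) (hJ : J.PosDef)
    (G : Fin c ⊕ Fin m → ℝ)
    (Λβ : Set (Fin c → ℝ)) (hΛne : Λβ.Nonempty) (hΛclosed : IsClosed Λβ)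
    (hΛconvex : Convex ℝ Λβ) :
    let Jdb := J.toBlocks₂₁
    let Jd := J.toBlocks₂₂
    let H : Matrix (Fin c) (Fin c ⊕ Fin m) ℝ := Matrix.fromCols 1 0
    let Y : Fin c ⊕ Fin m → ℝ := J⁻¹ *ᵥ G
    let Yb : Fin c → ℝ := fun i => Y (Sum.inl i)
    let Gd : Fin m → ℝ := fun i => G (Sum.inr i)
    let q : (Fin c ⊕ Fin m → ℝ) → ℝ := fun lam => (lam - Y) ⬝ᵥ (J *ᵥ (lam - Y))
    let qβ : (Fin c → ℝ) → ℝ :=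
      fun lamb => (lamb - Yb) ⬝ᵥ ((H * J⁻¹ * Hᵀ)⁻¹ *ᵥ (lamb - Yb))
    ∃ lambhat ∈ Λβ,
      (∀ lamb ∈ Λβ, qβ lambhat ≤ qβ lamb) ∧
      (∀ lamb ∈ Λβ, qβ lamb = qβ lambhat → lamb = lambhat) ∧
      (let lamdhat : Fin m → ℝ := Jd⁻¹ *ᵥ Gd - Jd⁻¹ *ᵥ (Jdb *ᵥ lambhat)
       let lamhat : Fin c ⊕ Fin m → ℝ := Sum.elim lambhat lamdhat
       (∀ lam : Fin c ⊕ Fin m → ℝ, (fun i => lam (Sum.inl i)) ∈ Λβ → q lamhat ≤ q lam) ∧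
       (∀ lam : Fin c ⊕ Fin m → ℝ, (fun i => lam (Sum.inl i)) ∈ Λβ →
          q lam = q lamhat → lam = lamhat)) := by
  intro Jdb Jd H Y Yb Gd q qβ
  have hHJH : H * J⁻¹ * Hᵀ = J⁻¹.toBlocks₁₁ := fromCols_one_zero_mul_mul_transpose J⁻¹
  have hD : Jd.PosDef := hJ.submatrix Sum.inr_injective
  have hS : (H * J⁻¹ * Hᵀ)⁻¹.PosDef := hHJH ▸ (hJ.inv.submatrix Sum.inl_injective).inv
  obtain ⟨lambhat, hmem, hmin⟩ := hS.exists_isMinOn_dotProduct_mulVec_sub Yb hΛne hΛclosed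
  have huniq : ∀ lamb ∈ Λβ, qβ lamb = qβ lambhat → lamb = lambhat := fun lamb hlamb heq =>
    (hS.strictConvexOn_dotProduct_mulVec_sub Yb hΛconvex).eq_of_isMinOn
      (fun w hw => heq.trans_le (hmin hw)) hmin hlamb hmem
  have hY : J *ᵥ Y = G := by
    let := hJ.isUnit.invertible
    rw [mulVec_mulVec, mul_inv_of_invertible, one_mulVec]
  let φ (b : Fin c → ℝ) : Fin m → ℝ := Jd⁻¹ *ᵥ Gd - Jd⁻¹ *ᵥ (Jdb *ᵥ b)
  let qδ (w : Fin m → ℝ) : ℝ := w ⬝ᵥ Jd *ᵥ w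
  have hsplit (lam : Fin c ⊕ Fin m → ℝ) :
      q lam = qβ (lam ∘ Sum.inl) + qδ (lam ∘ Sum.inr - φ (lam ∘ Sum.inl)) := by
    simp only [q, qβ, qδ, φ, hHJH]
    exact sub_dotProduct_mulVec_sub_eq_schur_add J hJ.isHermitian hJ.isUnit hD.isUnit hY lam
  have hqδ_pos (w : Fin m → ℝ) (hw : w ≠ 0) : 0 < qδ w := hD.dotProduct_mulVec_pos' hw
  have hqδ_zero : qδ 0 = 0 := zero_dotProduct _
  refine ⟨lambhat, hmem, hmin, huniq, fun lam hlam => ?_, fun lam hlam => ?_⟩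
  · exact isMinOn_sumElim_of_eq_add hsplit (fun w => hD.posSemidef.dotProduct_mulVec_nonneg w)
      hqδ_zero hmin hlam
  · exact eq_sumElim_of_eq_add hsplit hqδ_pos hqδ_zero hmin huniq hlam

/-- Corollary 1 (deterministic core): for a symmetric positive definite block matrix `J`,
`G ∈ ℝ^p`, `Y = J⁻¹ G`, `H = (I_c : 0)` and a nonempty closed convex cone `Λ_β ⊆ ℝ^c`,
the quadratic form `q(λ) = (λ − Y)ᵀ J (λ − Y)` attains its minimum over `Λ_β × ℝ^{p−c}`
at a unique point `λ̂ = (λ̂_β, λ̂_δ)`, where `λ̂_β` is the unique minimizer over `Λ_β` of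
`q_β(λ_β) = (λ_β − Y_β)ᵀ (H J⁻¹ Hᵀ)⁻¹ (λ_β − Y_β)` and
`λ̂_δ = J_δ⁻¹ G_δ − J_δ⁻¹ J_δβ λ̂_β`. -/
theorem cone_product_minimizer {c m : ℕ} (hc : 1 ≤ c) (hm : 1 ≤ m)
    (J : Matrix (Fin c ⊕ Fin m) (Fin c ⊕ Fin m) ℝ) (hJsymm : J.IsSymm) (hJ : J.PosDef)
    (G : Fin c ⊕ Fin m → ℝ)
    (Λβ : Set (Fin c → ℝ)) (hΛne : Λβ.Nonempty) (hΛclosed : IsClosed Λβ)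
    (hΛconvex : Convex ℝ Λβ) (hΛcone : ∀ x ∈ Λβ, ∀ a : ℝ, 0 < a → a • x ∈ Λβ) :
    let Jdb := J.toBlocks₂₁
    let Jd := J.toBlocks₂₂
    let H : Matrix (Fin c) (Fin c ⊕ Fin m) ℝ := Matrix.fromCols 1 0
    let Y : Fin c ⊕ Fin m → ℝ := J⁻¹ *ᵥ G
    let Yb : Fin c → ℝ := fun i => Y (Sum.inl i)
    let Gd : Fin m → ℝ := fun i => G (Sum.inr i)
    let q : (Fin c ⊕ Fin m → ℝ) → ℝ := fun lam => (lam - Y) ⬝ᵥ (J *ᵥ (lam - Y))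
    let qβ : (Fin c → ℝ) → ℝ :=
      fun lamb => (lamb - Yb) ⬝ᵥ ((H * J⁻¹ * Hᵀ)⁻¹ *ᵥ (lamb - Yb))
    ∃ lambhat ∈ Λβ,
      (∀ lamb ∈ Λβ, qβ lambhat ≤ qβ lamb) ∧
      (∀ lamb ∈ Λβ, qβ lamb = qβ lambhat → lamb = lambhat) ∧
      (let lamdhat : Fin m → ℝ := Jd⁻¹ *ᵥ Gd - Jd⁻¹ *ᵥ (Jdb *ᵥ lambhat)
       let lamhat : Fin c ⊕ Fin m → ℝ := Sum.elim lambhat lamdhat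
       (∀ lam : Fin c ⊕ Fin m → ℝ, (fun i => lam (Sum.inl i)) ∈ Λβ → q lamhat ≤ q lam) ∧
       (∀ lam : Fin c ⊕ Fin m → ℝ, (fun i => lam (Sum.inl i)) ∈ Λβ →
          q lam = q lamhat → lam = lamhat)) :=
  cone_product_minimizer_general J hJ G Λβ hΛne hΛclosed hΛconvex
end

section
/- Let d ≥ 1 and r ≥ 1, let B = (b_{jt}) be a d×r matrix with nonnegative real entries such that Σ_{t=1}^r b_{jt} = 1 for every j, and let S₁,…,S_r be independent unit Fréchet random variables on a probability space (Ω, P). Define Z_j := max_{t=1,…,r} b_{jt} S_t and let F(z) := exp(−1/z) for z > 0 denote the common marginal distribution function of the Z_j. Then for every x ∈ [0,∞)^d, lim_{t → 0⁺} t⁻¹ · P[ 1 − F(Z₁) ≤ t x₁ or … or 1 − F(Z_d) ≤ t x_d ] = Σ_{t=1}^r max_{j=1,…,d} b_{jt} x_j. -/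
/-!
For `0 ≤ t x_j < 1` put `L_j = -log (1 - t x_j)`. Since `1 - F(z) ≤ t x_j ↔ 1 ≤ L_j z`, the event
`∃ j, 1 - F(Z_j) ≤ t x_j` is `∃ s, 1 ≤ c_s S_s` with `c_s = max_j L_j b_{js}`, and independence
together with `P[c S < 1] = exp (-c)` gives its probability `1 - exp (-G t)`, `G t = Σ_s c_s`.
As `L_j / t → x_j`, `G t / t → Σ_s max_j b_{js} x_j`, and `1 - exp (-G) ~ G` as `G → 0`.
-/

open MeasureTheory ProbabilityTheory Filter Set Topology Real

noncomputable def frechetCdf (z : ℝ) : ℝ := if 0 < z then exp (-1 / z) else 0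

lemma neg_log_one_sub_nonneg {u : ℝ} (hu₀ : 0 ≤ u) (hu₁ : u < 1) : 0 ≤ -log (1 - u) :=
  neg_nonneg.2 (log_nonpos (by linarith) (by linarith))

lemma one_sub_frechetCdf_le_iff {u : ℝ} (hu₀ : 0 ≤ u) (hu₁ : u < 1) (z : ℝ) :
    1 - frechetCdf z ≤ u ↔ 1 ≤ -log (1 - u) * z := by
  unfold frechetCdf
  split_ifs with hz
  · rw [sub_le_comm, ← log_le_iff_le_exp (by linarith), ← div_le_iff₀ hz, neg_div, le_neg]
  · have := mul_nonpos_of_nonneg_of_nonpos (neg_log_one_sub_nonneg hu₀ hu₁) (not_lt.1 hz)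
    constructor <;> intro h <;> linarith

lemma one_le_sup'_mul_iff {ι : Type*} [Fintype ι] [Nonempty ι] {c : ι → ℝ} (hc : ∀ i, 0 ≤ c i)
    (y : ℝ) : 1 ≤ Finset.univ.sup' Finset.univ_nonempty c * y ↔ ∃ i, 1 ≤ c i * y := by
  rcases le_or_gt 0 y with hy | hy
  · simp [Finset.sup'_mul₀ hy, Finset.le_sup'_iff]
  · have hsup : 0 ≤ Finset.univ.sup' Finset.univ_nonempty c :=
      Finset.le_sup'_of_le _ (Finset.mem_univ (Classical.arbitrary ι)) (hc _)
    have := mul_nonpos_of_nonneg_of_nonpos hsup hy.le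
    refine ⟨fun h => by linarith, fun ⟨i, hi⟩ => ?_⟩
    nlinarith [hc i]

lemma exists_one_sub_frechetCdf_sup'_le_iff {ι κ : Type*} [Fintype ι] [Fintype κ] [Nonempty ι]
    [Nonempty κ] {B : ι → κ → ℝ} (hB : ∀ j s, 0 ≤ B j s) {u : ι → ℝ} (hu₀ : ∀ j, 0 ≤ u j)
    (hu₁ : ∀ j, u j < 1) (y : κ → ℝ) :
    (∃ j, 1 - frechetCdf (Finset.univ.sup' Finset.univ_nonempty fun s => B j s * y s) ≤ u j) ↔
      ∃ s, 1 ≤ (Finset.univ.sup' Finset.univ_nonempty fun j => -log (1 - u j) * B j s) * y s := by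
  have hL := fun j => neg_log_one_sub_nonneg (hu₀ j) (hu₁ j)
  simp only [one_sub_frechetCdf_le_iff (hu₀ _) (hu₁ _), Finset.mul₀_sup' (hL _),
    Finset.le_sup'_iff, Finset.mem_univ, true_and,
    one_le_sup'_mul_iff fun j => mul_nonneg (hL j) (hB j _), mul_assoc]
  exact exists_comm

lemma tendsto_neg_log_one_sub_mul_div (y : ℝ) :
    Tendsto (fun t => -log (1 - t * y) / t) (𝓝[>] 0) (𝓝 y) := by
  have hderiv : HasDerivAt (fun t => -log (1 - t * y)) y 0 := by
    simpa using ((((hasDerivAt_id (0 : ℝ)).mul_const y).const_sub 1).log (by simp)).fun_neg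
  refine hderiv.tendsto_slope_zero_right.congr fun t => ?_
  simp [div_eq_inv_mul]

lemma tendsto_inv_mul_one_sub_exp_neg {G : ℝ → ℝ} {T : ℝ}
    (h : Tendsto (fun t => G t / t) (𝓝[>] 0) (𝓝 T)) :
    Tendsto (fun t => t⁻¹ * (1 - exp (-G t))) (𝓝[>] 0) (𝓝 T) := by
  set φ : ℝ → ℝ := fun u => 1 - exp (-u)
  have hφ : HasDerivAt φ 1 0 := by
    simpa using (((hasDerivAt_neg (0 : ℝ)).exp).const_sub 1)
  have hG : Tendsto G (𝓝[>] 0) (𝓝 0) := by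
    have h0 : Tendsto (fun t : ℝ => t * (G t / t)) (𝓝[>] 0) (𝓝 (0 * T)) :=
      (tendsto_id.mono_left nhdsWithin_le_nhds).mul h
    rw [zero_mul] at h0
    refine h0.congr' ?_
    filter_upwards [self_mem_nhdsWithin] with t (ht : 0 < t)
    field_simp
  -- `1 - exp (-u) = u * dslope φ 0 u`, and `dslope φ 0` is continuous at `0` with value `φ' 0 = 1`.
  have hslope : Tendsto (fun t => dslope φ 0 (G t)) (𝓝[>] 0) (𝓝 1) := by
    rw [← hφ.deriv, ← dslope_same]
    exact (continuousAt_dslope_same.2 hφ.differentiableAt).tendsto.comp hG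
  have hprod := h.mul hslope
  rw [mul_one] at hprod
  refine hprod.congr fun t => ?_
  have hφG := sub_smul_dslope φ 0 (G t)
  simp only [φ, sub_zero, smul_eq_mul, neg_zero, exp_zero, sub_self] at hφG
  rw [← hφG]
  ring

lemma tendsto_sum_sup'_neg_log_one_sub_div {ι κ : Type*} [Fintype ι] [Nonempty ι] [Fintype κ]
    (B : ι → κ → ℝ) (x : ι → ℝ) :
    Tendsto (fun t => (∑ s, Finset.univ.sup' Finset.univ_nonempty
        fun j => -log (1 - t * x j) * B j s) / t) (𝓝[>] 0)
      (𝓝 (∑ s, Finset.univ.sup' Finset.univ_nonempty fun j => B j s * x j)) := by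
  have hlim : Tendsto (fun t => ∑ s, Finset.univ.sup' Finset.univ_nonempty
      fun j => -log (1 - t * x j) / t * B j s) (𝓝[>] 0)
      (𝓝 (∑ s, Finset.univ.sup' Finset.univ_nonempty fun j => B j s * x j)) := by
    refine tendsto_finsetSum _ fun s _ => ?_
    refine Tendsto.finset_sup'_nhds_apply _ fun j _ => ?_
    rw [mul_comm]
    exact (tendsto_neg_log_one_sub_mul_div (x j)).mul_const _
  refine hlim.congr' ?_
  filter_upwards [self_mem_nhdsWithin] with t (ht : 0 < t)
  rw [div_eq_inv_mul, Finset.mul_sum]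
  refine Finset.sum_congr rfl fun s _ => ?_
  rw [Finset.mul₀_sup' (inv_nonneg.2 ht.le)]
  simp only [div_eq_inv_mul, mul_assoc]

section Probability

variable {Ω : Type*} [MeasurableSpace Ω] {μ : Measure Ω}

lemma measure_lt_eq_of_tendsto_measure_le {X : Ω → ℝ} {a : ℝ} {m : ENNReal}
    (h : Tendsto (fun x => μ {ω | X ω ≤ x}) (𝓝[<] a) (𝓝 m)) :
    μ {ω | X ω < a} = m := by
  obtain ⟨u, hu_mono, hu_lt, hu⟩ := exists_seq_strictMono_tendsto a
  have hunion : {ω | X ω < a} = ⋃ n, {ω | X ω ≤ u n} := by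
    ext ω
    simp only [mem_ofPred_eq, mem_iUnion]
    refine ⟨fun hω => ?_, fun ⟨n, hn⟩ => hn.trans_lt (hu_lt n)⟩
    obtain ⟨n, hn⟩ := (hu.eventually (eventually_gt_nhds hω)).exists
    exact ⟨n, hn.le⟩
  have hu' : Tendsto u atTop (𝓝[<] a) :=
    tendsto_nhdsWithin_iff.2 ⟨hu, .of_forall hu_lt⟩
  rw [hunion]
  refine tendsto_nhds_unique (tendsto_measure_iUnion_atTop ?_) (h.comp hu')
  exact fun m n hmn ω (hω : X ω ≤ u m) => hω.trans (hu_mono.monotone hmn)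

variable [IsProbabilityMeasure μ]

lemma measure_mul_lt_one_of_frechet {X : Ω → ℝ}
    (hX : ∀ x : ℝ, 0 < x → μ {ω | X ω ≤ x} = ENNReal.ofReal (exp (-1 / x)))
    {c : ℝ} (hc : 0 ≤ c) :
    μ {ω | c * X ω < 1} = ENNReal.ofReal (exp (-c)) := by
  rcases hc.eq_or_lt with rfl | hc
  · simp
  have hcont : Tendsto (fun x : ℝ => ENNReal.ofReal (exp (-1 / x))) (𝓝[<] c⁻¹)
      (𝓝 (ENNReal.ofReal (exp (-1 / c⁻¹)))) :=
    (ENNReal.continuous_ofReal.continuousAt.comp (f := fun x : ℝ => exp (-1 / x))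
      (by fun_prop (disch := positivity))).tendsto.mono_left nhdsWithin_le_nhds
  have hlt : μ {ω | X ω < c⁻¹} = ENNReal.ofReal (exp (-c)) := by
    refine measure_lt_eq_of_tendsto_measure_le (hcont.congr' ?_) |>.trans (by simp [div_inv_eq_mul])
    filter_upwards [Ioo_mem_nhdsLT (inv_pos.2 hc)] with x hx
    exact (hX x hx.1).symm
  simpa [← lt_div_iff₀' hc] using hlt

lemma measureReal_exists_one_le_mul_of_iIndepFun {κ : Type*} [Fintype κ] {S : κ → Ω → ℝ}
    (hS : ∀ s, Measurable (S s)) (hindep : iIndepFun S μ)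
    (hfrechet : ∀ s, ∀ x : ℝ, 0 < x → μ {ω | S s ω ≤ x} = ENNReal.ofReal (exp (-1 / x)))
    {c : κ → ℝ} (hc : ∀ s, 0 ≤ c s) :
    μ.real {ω | ∃ s, 1 ≤ c s * S s ω} = 1 - exp (-∑ s, c s) := by
  have hmeas : ∀ s, MeasurableSet {y : ℝ | c s * y < 1} := fun s =>
    measurableSet_lt (measurable_const.mul measurable_id) measurable_const
  have hcompl : {ω | ∃ s, 1 ≤ c s * S s ω} = (⋂ s, S s ⁻¹' {y | c s * y < 1})ᶜ := by
    ext ω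
    simp [not_lt]
  rw [hcompl, probReal_compl_eq_one_sub (.iInter fun s => hS s (hmeas s)), measureReal_def,
    hindep.meas_iInter fun s => ⟨_, hmeas s, rfl⟩, ENNReal.toReal_prod]
  simp only [preimage_ofPred_eq, measure_mul_lt_one_of_frechet (hfrechet _) (hc _),
    ENNReal.toReal_ofReal (exp_pos _).le, ← exp_sum, Finset.sum_neg_distrib]

end Probability

theorem max_linear_stdf_limit_general {d r : ℕ} (hd : 0 < d) (hr : 0 < r)
    (B : Fin d → Fin r → ℝ) (hB : ∀ j t, 0 ≤ B j t)
    {Ω : Type*} [MeasurableSpace Ω] (P : Measure Ω) [IsProbabilityMeasure P]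
    (S : Fin r → Ω → ℝ) (hSmeas : ∀ t, Measurable (S t))
    (hindep : ProbabilityTheory.iIndepFun S P)
    (hfrechet : ∀ t, ∀ x : ℝ, 0 < x →
      P {ω | S t ω ≤ x} = ENNReal.ofReal (Real.exp (-1 / x)))
    (Z : Fin d → Ω → ℝ)
    (hZ : ∀ j ω, Z j ω = Finset.univ.sup' (Finset.univ_nonempty_iff.mpr ⟨⟨0, hr⟩⟩)
      (fun t => B j t * S t ω))
    (F : ℝ → ℝ) (hF : ∀ z : ℝ, F z = if 0 < z then Real.exp (-1 / z) else 0)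
    (x : Fin d → ℝ) (hx : ∀ j, 0 ≤ x j) :
    Filter.Tendsto
      (fun t : ℝ => t⁻¹ * (P {ω | ∃ j, 1 - F (Z j ω) ≤ t * x j}).toReal)
      (nhdsWithin 0 (Set.Ioi 0))
      (nhds (∑ t, Finset.univ.sup' (Finset.univ_nonempty_iff.mpr ⟨⟨0, hd⟩⟩)
        (fun j => B j t * x j))) := by
  have : Nonempty (Fin d) := ⟨⟨0, hd⟩⟩
  have : Nonempty (Fin r) := ⟨⟨0, hr⟩⟩
  obtain rfl : F = frechetCdf := funext hF
  have hsmall : ∀ᶠ t in 𝓝[>] 0, 0 < t ∧ ∀ j, t * x j < 1 := by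
    refine eventually_mem_nhdsWithin.and (eventually_all.2 fun j => ?_)
    have hcont : Tendsto (fun t : ℝ => t * x j) (𝓝[>] 0) (𝓝 0) := by
      simpa using (tendsto_id.mono_left (nhdsWithin_le_nhds (a := (0 : ℝ)))).mul_const (x j)
    exact hcont.eventually (gt_mem_nhds one_pos)
  refine (tendsto_inv_mul_one_sub_exp_neg (tendsto_sum_sup'_neg_log_one_sub_div B x)).congr' ?_
  filter_upwards [hsmall] with t ⟨ht, htx⟩
  have htx₀ j : 0 ≤ t * x j := mul_nonneg ht.le (hx j)
  have hevent : {ω | ∃ j, 1 - frechetCdf (Z j ω) ≤ t * x j} = {ω | ∃ s, 1 ≤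
      (Finset.univ.sup' Finset.univ_nonempty fun j => -log (1 - t * x j) * B j s) * S s ω} := by
    ext ω
    simp only [mem_ofPred_eq, hZ]
    exact exists_one_sub_frechetCdf_sup'_le_iff hB htx₀ htx fun s => S s ω
  rw [hevent, ← measureReal_def, measureReal_exists_one_le_mul_of_iIndepFun hSmeas hindep hfrechet
    fun s => Finset.le_sup'_of_le _ (Finset.mem_univ (⟨0, hd⟩ : Fin d))
      (mul_nonneg (neg_log_one_sub_nonneg (htx₀ _) (htx _)) (hB _ _))]

/-- The max-linear model has stable tail dependence function `ℓ(x; B) = Σ_t max_j b_{jt} x_j`: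
with `F(z) = exp(−1/z)` for `z > 0` (and `0` otherwise) the common margin of the `Z_j`,
`lim_{t→0⁺} t⁻¹ P[∃ j, 1 − F(Z_j) ≤ t x_j] = Σ_t max_j b_{jt} x_j`. -/
theorem max_linear_stdf_limit {d r : ℕ} (hd : 0 < d) (hr : 0 < r)
    (B : Fin d → Fin r → ℝ) (hB : ∀ j t, 0 ≤ B j t)
    (hrow : ∀ j, ∑ t, B j t = 1)
    {Ω : Type*} [MeasurableSpace Ω] (P : Measure Ω) [IsProbabilityMeasure P]
    (S : Fin r → Ω → ℝ) (hSmeas : ∀ t, Measurable (S t))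
    (hindep : ProbabilityTheory.iIndepFun S P)
    (hfrechet : ∀ t, ∀ x : ℝ, 0 < x →
      P {ω | S t ω ≤ x} = ENNReal.ofReal (Real.exp (-1 / x)))
    (hfrechet0 : ∀ t, ∀ x : ℝ, x ≤ 0 → P {ω | S t ω ≤ x} = 0)
    (Z : Fin d → Ω → ℝ)
    (hZ : ∀ j ω, Z j ω = Finset.univ.sup' (Finset.univ_nonempty_iff.mpr ⟨⟨0, hr⟩⟩)
      (fun t => B j t * S t ω))
    (F : ℝ → ℝ) (hF : ∀ z : ℝ, F z = if 0 < z then Real.exp (-1 / z) else 0)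
    (x : Fin d → ℝ) (hx : ∀ j, 0 ≤ x j) :
    Filter.Tendsto
      (fun t : ℝ => t⁻¹ * (P {ω | ∃ j, 1 - F (Z j ω) ≤ t * x j}).toReal)
      (nhdsWithin 0 (Set.Ioi 0))
      (nhds (∑ t, Finset.univ.sup' (Finset.univ_nonempty_iff.mpr ⟨⟨0, hd⟩⟩)
        (fun j => B j t * x j))) :=
  max_linear_stdf_limit_general hd hr B hB P S hSmeas hindep hfrechet Z hZ F hF x hx
end
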